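/- arXiv:1707.06727 — 2 statements merged into one kernel-verified Lean document; each statement's English description precedes it below -/
import Mathlib

section
/- Every transversal matroid is representable over the real numbers. Precisely: for every finite set S = {a_1, …, a_n} and finite family 𝒜 = (A_1, …, A_m) of subsets of S, there exists an m × n matrix X over ℝ such that for every subset J of {1, …, n}, the columns of X indexed by J are linearly independent over ℝ if and only if {a_j : j ∈ J} is a partial transversal of 𝒜. -/
/-- `I` is a partial transversal of the set system `A : Fin m → Finset (Fin n)`. -/
def IsPartialTransversal {n m : ℕ} (A : Fin m → Finset (Fin n)) (I : Finset (Fin n)) : Prop :=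
  ∃ φ : I → Fin m, Function.Injective φ ∧ ∀ x : I, (x : Fin n) ∈ A (φ x)

/-! Take the `m × n` matrix whose `(i, j)` entry is an independent indeterminate when `j ∈ A i`
and `0` otherwise. Columns supported by `J` span a space of dimension at most the size of
their row neighbourhood, so independence of the columns gives Hall's condition and hence a
matching. Conversely, a matching `φ : J → Fin m` picks out a square minor whose determinant
is a nonzero polynomial: it contains the monomial `∏ X (φ j, j)`, which alone survives
evaluation at the indicator of the graph of `φ`. Over an infinite field some point avoids
the finitely many zero sets of these minors, and evaluating there gives the matrix. -/

open MvPolynomial Finset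

theorem LinearIndependent.card_le_card_of_support_subset {K α ι : Type*} [Field K] [Fintype ι]
    {v : ι → α → K} (hv : LinearIndependent K v) (T : Finset α)
    (hT : ∀ r, Function.support (v r) ⊆ T) : Fintype.card ι ≤ #T := by
  have hrestrict : LinearIndependent K fun r (i : T) => v r i := by
    rw [Fintype.linearIndependent_iff] at hv ⊢
    intro g hg
    refine hv g (funext fun i => ?_)
    by_cases hi : i ∈ T
    · simpa using congrFun hg ⟨i, hi⟩
    · have hvi : ∀ r, v r i = 0 := fun r => Function.notMem_support.mp fun h => hi (hT r h)
      simp [Finset.sum_apply, hvi]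
  simpa using hrestrict.fintype_card_le_finrank

theorem MvPolynomial.exists_forall_eval_ne_zero {R σ ι : Type*} [CommRing R] [IsDomain R]
    [Infinite R] [Fintype ι] (p : ι → MvPolynomial σ R) (hp : ∀ i, p i ≠ 0) :
    ∃ x : σ → R, ∀ i, eval x (p i) ≠ 0 := by
  have hprod : ∏ i, p i ≠ 0 := prod_ne_zero_iff.mpr fun i _ => hp i
  obtain ⟨x, hx⟩ : ∃ x, eval x (∏ i, p i) ≠ 0 := by
    by_contra! h
    exact hprod (MvPolynomial.funext fun x => by simpa using h x)
  rw [map_prod, prod_ne_zero_iff] at hx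
  exact ⟨x, fun i => hx i (mem_univ i)⟩

theorem Matrix.linearIndependent_cols_of_det_submatrix_ne_zero {K ι κ ι' : Type*} [Field K]
    [Fintype ι'] [DecidableEq ι'] {X : Matrix ι κ K} {r : ι' → ι} {c : ι' → κ}
    (h : (X.submatrix r c).det ≠ 0) : LinearIndependent K fun y i => X i (c y) :=
  (linearIndependent_cols_of_det_ne_zero h).of_comp (LinearMap.funLeft K K r)

theorem IsPartialTransversal.of_linearIndependent_cols {K : Type*} [Field K] {n m : ℕ}
    {A : Fin m → Finset (Fin n)} {X : Matrix (Fin m) (Fin n) K}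
    (hX : ∀ i j, X i j ≠ 0 → j ∈ A i) {J : Finset (Fin n)}
    (h : LinearIndependent K fun j : J => fun i => X i j) : IsPartialTransversal A J := by
  refine (Fintype.all_card_le_filter_rel_iff_exists_injective
    (fun (x : J) i => (x : Fin n) ∈ A i)).mp fun s => ?_
  simpa using (h.comp ((↑) : s → J) Subtype.val_injective).card_le_card_of_support_subset _
    fun r i hi => by simpa using ⟨r.1.1, ⟨r.1.2, r.2⟩, hX i _ hi⟩

noncomputable def patternMatrix (K : Type*) [CommSemiring K] {ι κ : Type*} [DecidableEq κ]
    (A : ι → Finset κ) : Matrix ι κ (MvPolynomial (ι × κ) K) :=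
  Matrix.of fun i j => if j ∈ A i then X (i, j) else 0

theorem det_submatrix_patternMatrix_ne_zero {K ι κ ι' : Type*} [Field K] [DecidableEq κ]
    [Fintype ι'] [DecidableEq ι'] {A : ι → Finset κ} {r : ι' → ι} {c : ι' → κ} (hr : r.Injective)
    (hc : c.Injective) (hA : ∀ y, c y ∈ A (r y)) :
    ((patternMatrix K A).submatrix r c).det ≠ 0 := by
  classical
  let graph : ι × κ → K := fun p => if ∃ y, r y = p.1 ∧ c y = p.2 then 1 else 0
  have heval : ((patternMatrix K A).submatrix r c).map (eval graph) = 1 := by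
    ext x y
    rcases eq_or_ne x y with rfl | hxy
    · have hdiag : ∃ z, r z = r x ∧ c z = c x := ⟨x, rfl, rfl⟩
      simp [patternMatrix, graph, hA, hdiag]
    · have hno : ¬∃ z, r z = r x ∧ c z = c y := fun ⟨z, hzx, hzy⟩ =>
        hxy ((hr hzx).symm.trans (hc hzy))
      simp [patternMatrix, graph, hno, hxy, apply_ite]
  intro hzero
  have := congrArg (eval graph) hzero
  rw [RingHom.map_det, RingHom.mapMatrix_apply, heval, Matrix.det_one, map_zero] at this
  exact one_ne_zero this

theorem exists_matrix_linearIndependent_cols_iff_isPartialTransversal (K : Type*) [Field K]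
    [Infinite K] {n m : ℕ} (A : Fin m → Finset (Fin n)) :
    ∃ X : Matrix (Fin m) (Fin n) K, ∀ J : Finset (Fin n),
      LinearIndependent K (fun j : J => fun i => X i j) ↔ IsPartialTransversal A J := by
  classical
  obtain ⟨x, hx⟩ := exists_forall_eval_ne_zero
    (fun J : {J : Finset (Fin n) // IsPartialTransversal A J} =>
      ((patternMatrix K A).submatrix J.2.choose Subtype.val).det)
    fun J => det_submatrix_patternMatrix_ne_zero J.2.choose_spec.1 Subtype.val_injective
      J.2.choose_spec.2
  refine ⟨(patternMatrix K A).map (eval x), fun J => ⟨fun h => ?_, fun hJ => ?_⟩⟩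
  · refine .of_linearIndependent_cols (fun i j hij => ?_) h
    by_contra hj
    simp [patternMatrix, hj] at hij
  · refine Matrix.linearIndependent_cols_of_det_submatrix_ne_zero (r := hJ.choose) ?_
    rw [Matrix.submatrix_map, ← RingHom.mapMatrix_apply, ← RingHom.map_det]
    exact hx ⟨J, hJ⟩

/-- Every transversal matroid is representable over the real numbers: there is an
`m × n` real matrix whose columns indexed by `J` are linearly independent iff the
corresponding ground-set elements form a partial transversal. -/
theorem transversal_matroid_representable_real (n m : ℕ) (A : Fin m → Finset (Fin n)) :
    ∃ X : Matrix (Fin m) (Fin n) ℝ,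
      ∀ J : Finset (Fin n),
        LinearIndependent ℝ (fun j : J => fun i : Fin m => X i j) ↔
          IsPartialTransversal A J :=
  exists_matrix_linearIndependent_cols_iff_isPartialTransversal ℝ A
end

section
/- (Piff–Welsh, positive characteristic case) For every prime p, every transversal matroid is representable over a sufficiently large finite field of characteristic p. Precisely: for every finite set S = {a_1, …, a_n}, every finite family 𝒜 = (A_1, …, A_m) of subsets of S, and every prime p, there exists a positive integer k and an m × n matrix X with entries in the finite field GF(p^k) such that, for every subset J of {1, …, n}, the columns of X indexed by J are linearly independent over GF(p^k) if and only if {a_j : j ∈ J} is a partial transversal of 𝒜. -/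
open MvPolynomial

section LinearAlgebra

variable {K ι κ : Type*} [Field K] [Fintype ι]

theorem linearIndependent_of_det_submatrix_ne_zero [DecidableEq ι] {v : ι → κ → K} (φ : ι → κ)
    (h : (Matrix.of fun i j => v j (φ i)).det ≠ 0) : LinearIndependent K v :=
  LinearIndependent.of_comp (LinearMap.funLeft K K φ)
    (Matrix.linearIndependent_cols_of_det_ne_zero h)

theorem LinearIndependent.card_le_of_forall_notMem_eq_zero {v : ι → κ → K}
    (hv : LinearIndependent K v) (N : Finset κ) (hN : ∀ j, ∀ i ∉ N, v j i = 0) :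
    Fintype.card ι ≤ N.card := by
  have hext : Function.ExtendByZero.linearMap K ((↑) : N → κ) ∘ (fun j (i : N) => v j i) = v := by
    funext j i
    simp only [Function.comp_apply, Function.ExtendByZero.linearMap_apply]
    by_cases hi : i ∈ N
    · exact Subtype.val_injective.extend_apply (fun i : N => v j i) 0 ⟨i, hi⟩
    · rw [hN j i hi]
      exact Function.extend_apply' _ _ _ fun ⟨a, ha⟩ => hi (ha ▸ a.2)
  have hres : LinearIndependent K fun j (i : N) => v j i :=
    LinearIndependent.of_comp (Function.ExtendByZero.linearMap K _) (hext ▸ hv)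
  simpa using hres.fintype_card_le_finrank

end LinearAlgebra

theorem Matrix.isHomogeneous_det {R σ ι : Type*} [CommRing R] [Fintype ι] [DecidableEq ι]
    {M : Matrix ι ι (MvPolynomial σ R)} (hM : ∀ i j, (M i j).IsHomogeneous 1) :
    M.det.IsHomogeneous (Fintype.card ι) := by
  rw [Matrix.det_apply]
  refine IsHomogeneous.sum _ _ _ fun τ _ => ?_
  have hprod : (∏ i, M (τ i) i).IsHomogeneous (Fintype.card ι) := by
    simpa using IsHomogeneous.prod Finset.univ (fun i => M (τ i) i) (fun _ => 1)
      fun i _ => hM _ _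
  rw [← mem_homogeneousSubmodule] at hprod ⊢
  rw [Units.smul_def]
  exact zsmul_mem hprod _

theorem MvPolynomial.exists_eval_ne_zero_of_sum_le_card {R σ ι : Type*} [CommRing R]
    [IsDomain R] (s : Finset ι) (F : ι → MvPolynomial σ R) (d : ι → ℕ)
    (hF : ∀ i ∈ s, F i ≠ 0) (hhom : ∀ i ∈ s, (F i).IsHomogeneous (d i))
    (hcard : ((∑ i ∈ s, d i : ℕ) : Cardinal) ≤ Cardinal.mk R) :
    ∃ w, ∀ i ∈ s, eval w (F i) ≠ 0 := by
  have hprod : ∏ i ∈ s, F i ≠ 0 := Finset.prod_ne_zero_iff.2 hF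
  by_contra! hzero
  refine hprod ((IsHomogeneous.prod s F d hhom).eq_zero_of_forall_eval_eq_zero_of_le_card
    (fun w => ?_) hcard)
  obtain ⟨i, hi, hw⟩ := hzero w
  rw [map_prod]
  exact Finset.prod_eq_zero hi hw

theorem GaloisField.natCast_le_mk (p : ℕ) [Fact p.Prime] (N : ℕ) :
    (N : Cardinal) ≤ Cardinal.mk (GaloisField p (N + 1)) := by
  rw [← Nat.cast_card, GaloisField.card p _ N.succ_ne_zero, Nat.cast_le]
  calc N ≤ N + 1 := N.le_succ
    _ ≤ 2 ^ (N + 1) := Nat.lt_two_pow_self.le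
    _ ≤ p ^ (N + 1) := Nat.pow_le_pow_left (Nat.Prime.two_le Fact.out) _

section Transversal

variable {n m : ℕ} (A : Fin m → Finset (Fin n))

noncomputable def transversalGenericMatrix (R : Type*) [CommRing R] :
    Matrix (Fin m) (Fin n) (MvPolynomial (Fin m × Fin n) R) :=
  Matrix.of fun i j => if j ∈ A i then X (i, j) else 0

noncomputable def transversalMinor (R : Type*) [CommRing R] (J : Finset (Fin n)) (φ : J → Fin m) :
    MvPolynomial (Fin m × Fin n) R :=
  ((transversalGenericMatrix A R).submatrix φ Subtype.val).det

theorem isHomogeneous_transversalMinor (R : Type*) [CommRing R] (J : Finset (Fin n))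
    (φ : J → Fin m) : (transversalMinor A R J φ).IsHomogeneous J.card := by
  rw [← Fintype.card_coe]
  refine Matrix.isHomogeneous_det fun a b => ?_
  simp only [transversalGenericMatrix, Matrix.submatrix_apply, Matrix.of_apply]
  split_ifs
  exacts [isHomogeneous_X _ _, isHomogeneous_zero _ _ _]

theorem transversalMinor_ne_zero (R : Type*) [CommRing R] [Nontrivial R] {J : Finset (Fin n)}
    {φ : J → Fin m} (hφ : Function.Injective φ) (hA : ∀ x, ↑x ∈ A (φ x)) :
    transversalMinor A R J φ ≠ 0 := by
  let w : Fin m × Fin n → R := fun q =>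
    if h : q.2 ∈ J then if φ ⟨q.2, h⟩ = q.1 then 1 else 0 else 0
  have hone : ((transversalGenericMatrix A R).submatrix φ Subtype.val).map (eval w) =
      (1 : Matrix J J R) := by
    ext a b
    by_cases hab : a = b
    · subst hab
      simp [transversalGenericMatrix, w, hA a]
    · simp only [transversalGenericMatrix, Matrix.map_apply, Matrix.submatrix_apply,
        Matrix.of_apply, Matrix.one_apply_ne hab]
      split_ifs <;> simp [w, hφ.ne (Ne.symm hab)]
  intro h
  have := congrArg (eval w) h
  rw [transversalMinor, RingHom.map_det, RingHom.mapMatrix_apply, hone, Matrix.det_one,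
    map_zero] at this
  exact one_ne_zero this

theorem linearIndependent_of_eval_transversalMinor_ne_zero {K : Type*} [Field K]
    (w : Fin m × Fin n → K) (J : Finset (Fin n)) (φ : J → Fin m)
    (h : eval w (transversalMinor A K J φ) ≠ 0) :
    LinearIndependent K fun j : J => fun i => (transversalGenericMatrix A K).map (eval w) i j := by
  rw [transversalMinor, RingHom.map_det] at h
  exact linearIndependent_of_det_submatrix_ne_zero φ h

theorem isPartialTransversal_of_linearIndependent {K : Type*} [Field K]
    (X : Matrix (Fin m) (Fin n) K) (hX : ∀ i j, j ∉ A i → X i j = 0) (J : Finset (Fin n))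
    (h : LinearIndependent K fun j : J => fun i => X i j) : IsPartialTransversal A J := by
  let t : J → Finset (Fin m) := fun j => Finset.univ.filter fun i => (j : Fin n) ∈ A i
  have hall : ∀ s : Finset J, s.card ≤ (s.biUnion t).card := fun s => by
    convert (h.comp _ Subtype.val_injective).card_le_of_forall_notMem_eq_zero (s.biUnion t)
      fun j i hi => hX i _ fun hj => hi (Finset.mem_biUnion.2 ⟨j, j.2, by simpa [t] using hj⟩)
    simp
  obtain ⟨φ, hφ, hφt⟩ := (Finset.all_card_le_biUnion_card_iff_existsInjective' t).1 hall
  exact ⟨φ, hφ, fun x => by simpa [t] using hφt x⟩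

end Transversal

theorem sum_card_finset_subtype_le (n : ℕ) (P : Finset (Fin n) → Prop) [DecidablePred P] :
    ∑ J : {J // P J}, (J : Finset (Fin n)).card ≤ n * 2 ^ n := by
  calc ∑ J : {J // P J}, (J : Finset (Fin n)).card
      ≤ Fintype.card {J // P J} • n :=
        Finset.sum_le_card_nsmul _ _ _ fun J _ => by simpa using J.1.card_le_univ
    _ ≤ 2 ^ n • n := by
        gcongr
        simpa using Fintype.card_subtype_le P
    _ = n * 2 ^ n := by rw [smul_eq_mul, mul_comm]

/-- **Piff–Welsh (positive characteristic case).** For every prime `p`, every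
transversal matroid is representable over a sufficiently large finite field
`GF(p^k)` of characteristic `p`. -/
theorem transversal_matroid_representable_finite_field
    (n m : ℕ) (A : Fin m → Finset (Fin n)) (p : ℕ) [Fact p.Prime] :
    ∃ k : ℕ, 0 < k ∧
      ∃ X : Matrix (Fin m) (Fin n) (GaloisField p k),
        ∀ J : Finset (Fin n),
          LinearIndependent (GaloisField p k) (fun j : J => fun i : Fin m => X i j) ↔
            IsPartialTransversal A J := by
  classical
  refine ⟨n * 2 ^ n + 1, Nat.succ_pos _, ?_⟩
  obtain ⟨w, hw⟩ := exists_eval_ne_zero_of_sum_le_card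
    (Finset.univ : Finset {J // IsPartialTransversal A J})
    (fun J => transversalMinor A _ J J.2.choose) (fun J => J.1.card)
    (fun J _ => transversalMinor_ne_zero A _ J.2.choose_spec.1 J.2.choose_spec.2)
    (fun J _ => isHomogeneous_transversalMinor A _ _ _)
    ((Nat.cast_le.2 (sum_card_finset_subtype_le n _)).trans (GaloisField.natCast_le_mk p _))
  refine ⟨(transversalGenericMatrix A _).map (eval w), fun J => ⟨fun hJ => ?_, fun hJ => ?_⟩⟩
  · exact isPartialTransversal_of_linearIndependent A _
      (fun i j hj => by simp [transversalGenericMatrix, hj]) J hJ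
  · exact linearIndependent_of_eval_transversalMinor_ne_zero A w J hJ.choose
      (hw ⟨J, hJ⟩ (Finset.mem_univ _))
end
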